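/- In the equally spaced piecewise linear setting, the equilibrium commuting cost function has the closed form: for every μ > 0, c̄_K(X, μ) = Xδ/(Kμ) whenever 0 < X ≤ Kμd, and c̄_K(X, μ) = Xδ/μ − (K−1)dδ whenever X ≥ Kμd. -/

import Mathlib

open MeasureTheory

/-- Piecewise linear schedule delay cost with preferred arrival time `tk`. -/
noncomputable def sdc (β γ tk t : ℝ) : ℝ := if t < tk then β * (tk - t) else γ * (t - tk)

/-- The `k`-th preferred arrival time `t_k = t₁ + (k-1)d`. -/
noncomputable def tpref (t₁ d : ℝ) (k : ℕ) : ℝ := t₁ + ((k : ℝ) - 1) * d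

/-- The envelope `ĉ_K(t) = min_{1 ≤ k ≤ K} c_k(t)`. -/
noncomputable def env (β γ t₁ d : ℝ) (K : ℕ) (t : ℝ) : ℝ :=
  sInf ((fun k : ℕ => sdc β γ (tpref t₁ d k) t) '' Set.Icc 1 K)

/-- The sublevel set `Γ_K(c) = {t : ĉ_K(t) ≤ c}`. -/
noncomputable def Gam (β γ t₁ d : ℝ) (K : ℕ) (c : ℝ) : Set ℝ :=
  {t : ℝ | env β γ t₁ d K t ≤ c}

/-- `IsCbar β γ t₁ d K X μ c` says that `c` is (a, hence the unique) value `c̄_K(X, μ)`: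
`c ≥ 0` and `μ · Leb(Γ_K(c)) = X`. -/
noncomputable def IsCbar (β γ t₁ d : ℝ) (K : ℕ) (X μ c : ℝ) : Prop :=
  0 ≤ c ∧ μ * (volume (Gam β γ t₁ d K c)).toReal = X

lemma sdc_le_iff {β γ : ℝ} (hβ : 0 < β) (hγ : 0 < γ) {c : ℝ} (hc : 0 ≤ c) (tk t : ℝ) :
    sdc β γ tk t ≤ c ↔ tk - c/β ≤ t ∧ t ≤ tk + c/γ := by
  unfold sdc
  split_ifs with h
  · constructor
    · intro h'
      have h1 : tk - t ≤ c / β := (le_div_iff₀ hβ).2 (by nlinarith)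
      have h2 : 0 ≤ c / γ := div_nonneg hc hγ.le
      constructor <;> linarith
    · rintro ⟨h1, _⟩
      have h2 : tk - t ≤ c / β := by linarith
      calc β * (tk - t) ≤ β * (c/β) := by nlinarith
        _ = c := by field_simp
  · push_neg at h
    constructor
    · intro h'
      have h1 : t - tk ≤ c / γ := (le_div_iff₀ hγ).2 (by nlinarith)
      have h2 : 0 ≤ c / β := div_nonneg hc hβ.le
      constructor <;> linarith
    · rintro ⟨_, h2⟩
      have h1 : t - tk ≤ c / γ := by linarith
      calc γ * (t - tk) ≤ γ * (c/γ) := by nlinarith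
        _ = c := by field_simp

lemma env_le_iff {β γ t₁ d : ℝ} {K : ℕ} (hK : 1 ≤ K) (t c : ℝ) :
    env β γ t₁ d K t ≤ c ↔ ∃ k ∈ Set.Icc 1 K, sdc β γ (tpref t₁ d k) t ≤ c := by
  have hfin : ((fun k : ℕ => sdc β γ (tpref t₁ d k) t) '' Set.Icc 1 K).Finite :=
    (Set.finite_Icc 1 K).image _
  have hne : ((fun k : ℕ => sdc β γ (tpref t₁ d k) t) '' Set.Icc 1 K).Nonempty :=
    ⟨_, ⟨1, Set.mem_Icc.2 ⟨le_refl 1, hK⟩, rfl⟩⟩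
  constructor
  · intro h
    obtain ⟨k, hk, hk'⟩ := hne.csInf_mem hfin
    refine ⟨k, hk, ?_⟩
    have h2 : sdc β γ (tpref t₁ d k) t
        = sInf ((fun k => sdc β γ (tpref t₁ d k) t) '' Set.Icc 1 K) := hk'
    rw [h2]; exact h
  · rintro ⟨k, hk, hle⟩
    exact le_trans (csInf_le hfin.bddBelow ⟨k, hk, rfl⟩) hle

lemma Gam_eq {β γ : ℝ} (hβ : 0 < β) (hγ : 0 < γ) (t₁ d : ℝ) {K : ℕ} (hK : 1 ≤ K)
    {c : ℝ} (hc : 0 ≤ c) :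
    Gam β γ t₁ d K c = ⋃ k ∈ Finset.Icc 1 K,
      Set.Icc (tpref t₁ d k - c/β) (tpref t₁ d k + c/γ) := by
  ext t
  simp only [Gam, Set.mem_setOf_eq, env_le_iff hK t c, sdc_le_iff hβ hγ hc,
    Set.mem_iUnion, Finset.mem_Icc, Set.mem_Icc, exists_prop]

lemma vol_small {β γ t₁ d c : ℝ} (hβ : 0 < β) (hγ : 0 < γ) (hd : 0 < d) (hc : 0 ≤ c)
    {K : ℕ} (hK : 1 ≤ K) (hsep : c/β + c/γ ≤ d) :
    (volume (Gam β γ t₁ d K c)).toReal = (K : ℝ) * (c/β + c/γ) := by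
  rw [Gam_eq hβ hγ t₁ d hK hc]
  have key : ∀ i j : ℕ, i < j → AEDisjoint volume
      (Set.Icc (tpref t₁ d i - c/β) (tpref t₁ d i + c/γ))
      (Set.Icc (tpref t₁ d j - c/β) (tpref t₁ d j + c/γ)) := by
    intro i j hij
    have hij' : (i : ℝ) + 1 ≤ (j : ℝ) := by exact_mod_cast hij
    have hBA : tpref t₁ d i + c/γ ≤ tpref t₁ d j - c/β := by
      unfold tpref
      nlinarith [mul_nonneg (by linarith : (0:ℝ) ≤ (j:ℝ) - (i:ℝ) - 1) hd.le]
    have hsub : Set.Icc (tpref t₁ d i - c/β) (tpref t₁ d i + c/γ) ∩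
        Set.Icc (tpref t₁ d j - c/β) (tpref t₁ d j + c/γ)
        ⊆ Set.Icc (tpref t₁ d j - c/β) (tpref t₁ d i + c/γ) := fun x hx =>
      ⟨hx.2.1, hx.1.2⟩
    refine measure_mono_null hsub ?_
    rw [Real.volume_Icc]
    exact ENNReal.ofReal_eq_zero.2 (by linarith)
  rw [measure_biUnion_finset₀ ?_ (fun b _ => measurableSet_Icc.nullMeasurableSet)]
  · simp only [Real.volume_Icc]
    have h2 : ∀ k : ℕ, tpref t₁ d k + c/γ - (tpref t₁ d k - c/β) = c/β + c/γ :=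
      fun k => by ring
    simp_rw [h2]
    rw [Finset.sum_const, Nat.card_Icc]
    simp only [Nat.add_sub_cancel, nsmul_eq_mul]
    rw [ENNReal.toReal_mul, ENNReal.toReal_ofReal (by positivity)]
    simp
  · intro i hi j hj hij
    rcases lt_or_gt_of_ne hij with h | h
    · exact key i j h
    · exact (key j i h).symm

lemma union_large {β γ t₁ d c : ℝ} (hd : 0 < d) (hsep : d ≤ c/β + c/γ) {K : ℕ} (hK : 1 ≤ K) :
    (⋃ k ∈ Finset.Icc 1 K, Set.Icc (tpref t₁ d k - c/β) (tpref t₁ d k + c/γ))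
      = Set.Icc (tpref t₁ d 1 - c/β) (tpref t₁ d K + c/γ) := by
  induction K, hK using Nat.le_induction with
  | base => simp
  | succ K hK ih =>
    rw [← Finset.insert_Icc_right_eq_Icc_add_one (by omega : 1 ≤ K + 1), Finset.set_biUnion_insert, ih]
    have h1 : tpref t₁ d (K+1) - c/β ≤ tpref t₁ d K + c/γ := by
      unfold tpref; push_cast; linarith
    have h2 : tpref t₁ d 1 - c/β ≤ tpref t₁ d (K+1) - c/β := by
      unfold tpref; push_cast
      nlinarith [mul_nonneg (Nat.cast_nonneg K : (0:ℝ) ≤ (K:ℝ)) hd.le]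
    have h3 : tpref t₁ d K + c/γ ≤ tpref t₁ d (K+1) + c/γ := by
      unfold tpref; push_cast; nlinarith
    ext x
    simp only [Set.mem_union, Set.mem_Icc]
    constructor
    · rintro (⟨ha, hb⟩ | ⟨ha, hb⟩) <;> constructor <;> linarith
    · rintro ⟨ha, hb⟩
      rcases le_total x (tpref t₁ d K + c/γ) with h | h
      · right; exact ⟨ha.trans' (le_refl _) |>.trans' (le_refl _), h⟩
      · left; exact ⟨by linarith, hb⟩

lemma vol_large {β γ t₁ d c : ℝ} (hβ : 0 < β) (hγ : 0 < γ) (hd : 0 < d) (hc : 0 ≤ c)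
    {K : ℕ} (hK : 1 ≤ K) (hsep : d ≤ c/β + c/γ) :
    (volume (Gam β γ t₁ d K c)).toReal = ((K : ℝ) - 1) * d + (c/β + c/γ) := by
  rw [Gam_eq hβ hγ t₁ d hK hc, union_large hd hsep hK, Real.volume_Icc]
  have hK1 : (1:ℝ) ≤ (K:ℝ) := by exact_mod_cast hK
  have heq : tpref t₁ d K + c/γ - (tpref t₁ d 1 - c/β) = ((K:ℝ) - 1) * d + (c/β + c/γ) := by
    unfold tpref; push_cast; ring
  rw [heq, ENNReal.toReal_ofReal]
  have hcb : 0 ≤ c/β := div_nonneg hc hβ.le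
  have hcg : 0 ≤ c/γ := div_nonneg hc hγ.le
  nlinarith

/-- Closed form of the equilibrium commuting cost: `c̄_K(X, μ) = Xδ/(Kμ)` when
`0 < X ≤ Kμd`, and `c̄_K(X, μ) = Xδ/μ - (K-1)dδ` when `X ≥ Kμd`. -/
theorem stmt5 (β γ : ℝ) (hβ : 0 < β) (hγ : 0 < γ) (δ : ℝ) (hδ : δ = β * γ / (β + γ))
    (K : ℕ) (hK : 1 ≤ K) (d : ℝ) (hd : 0 < d) (t₁ : ℝ)
    (μ : ℝ) (hμ : 0 < μ) (X c : ℝ) (hc : IsCbar β γ t₁ d K X μ c) :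
    (0 < X → X ≤ (K : ℝ) * μ * d → c = X * δ / ((K : ℝ) * μ)) ∧
    ((K : ℝ) * μ * d ≤ X → c = X * δ / μ - ((K : ℝ) - 1) * d * δ) := by
  obtain ⟨hc0, hX⟩ := hc
  have hδpos : 0 < δ := by rw [hδ]; positivity
  have hLδ : (c/β + c/γ) * δ = c := by
    rw [hδ]; field_simp; ring
  have hKpos : (0:ℝ) < (K:ℝ) := by exact_mod_cast hK
  rcases le_total (c/β + c/γ) d with hs | hs
  · rw [vol_small hβ hγ hd hc0 hK hs] at hX
    set L := c/β + c/γ with hLdef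
    constructor
    · intro _ _
      rw [← hX, ← hLδ]
      field_simp
    · intro h2
      have hdL : d ≤ L := by nlinarith [mul_pos hKpos hμ]
      have hLd : L = d := le_antisymm hs hdL
      have hXv : X = μ * ((K:ℝ) * d) := by rw [← hX, hLd]
      rw [← hLδ, hLd, hXv]
      field_simp
      ring
  · rw [vol_large hβ hγ hd hc0 hK hs] at hX
    set L := c/β + c/γ with hLdef
    constructor
    · intro _ hX2
      have hLle : L ≤ d := by nlinarith
      have hLd : L = d := le_antisymm hLle hs
      have hXv : X = μ * ((K:ℝ) * d) := by rw [← hX, hLd]; ring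
      rw [← hLδ, hLd, hXv]
      field_simp
    · intro _
      rw [← hLδ, ← hX]
      field_simp
      ring
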